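/- Γ admits the recursive presentation Γ = ⟨x, y | [[x^p, y^p], y^p], [[y^p, x^{2p}], x^{2p}] for all p = 2^k, k ≥ 0⟩: the presented group on generators x, y with relators [[x^p,y^p],y^p] and [[y^p,x^{2p}],x^{2p}] for every power of two p is isomorphic to Γ via x ↦ a, y ↦ b. -/

import Mathlib

namespace PinkGroup

mutual
  /-- forward action of the generator `a` -/
  def aF : List Bool → List Bool
    | [] => []
    | false :: w => true :: bF w
    | true :: w => false :: w
  /-- forward action of the generator `b` -/
  def bF : List Bool → List Bool
    | [] => []
    | false :: w => false :: aF w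
    | true :: w => true :: w
end

mutual
  /-- inverse of `aF` -/
  def aIF : List Bool → List Bool
    | [] => []
    | true :: w => false :: bIF w
    | false :: w => true :: w
  /-- inverse of `bF` -/
  def bIF : List Bool → List Bool
    | [] => []
    | false :: w => false :: aIF w
    | true :: w => true :: w
end

lemma inv_all (w : List Bool) :
    aF (aIF w) = w ∧ bF (bIF w) = w ∧ aIF (aF w) = w ∧ bIF (bF w) = w := by
  induction w with
  | nil => simp [aF, bF, aIF, bIF]
  | cons x w ih =>
    cases x <;>
      simp [aF, bF, aIF, bIF, ih.1, ih.2.1, ih.2.2.1, ih.2.2.2]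

/-- The generator `a` of Pink's group: `(1w)^a = 2 w^b`, `(2w)^a = 1w`
(where the letter `1` is `false` and the letter `2` is `true`). -/
def a : Equiv.Perm (List Bool) :=
  ⟨aF, aIF, fun w => (inv_all w).2.2.1, fun w => (inv_all w).1⟩

/-- The generator `b` of Pink's group: `(1w)^b = 1 w^a`, `(2w)^b = 2w`. -/
def b : Equiv.Perm (List Bool) :=
  ⟨bF, bIF, fun w => (inv_all w).2.2.2, fun w => (inv_all w).2.1⟩

/-- Pink's group `Γ`, the iterated monodromy group of `z^2 - 1`. -/
def Gam : Subgroup (Equiv.Perm (List Bool)) := Subgroup.closure {a, b}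

lemma a_mem : a ∈ Gam := Subgroup.subset_closure (by simp)

lemma b_mem : b ∈ Gam := Subgroup.subset_closure (by simp)


/-- The paper's commutator convention `[u,v] = u⁻¹v⁻¹uv`. -/
def pbr (u v : FreeGroup Bool) : FreeGroup Bool := u⁻¹ * v⁻¹ * u * v

/-- The relators `[[x^p, y^p], y^p]` and `[[y^p, x^(2p)], x^(2p)]` for all powers of two
`p = 2^k`, where `x = FreeGroup.of false` and `y = FreeGroup.of true`. -/
def GamRels : Set (FreeGroup Bool) :=
  {r | ∃ k : ℕ,
    r = pbr (pbr ((FreeGroup.of false) ^ 2 ^ k) ((FreeGroup.of true) ^ 2 ^ k))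
          ((FreeGroup.of true) ^ 2 ^ k) ∨
    r = pbr (pbr ((FreeGroup.of true) ^ 2 ^ k) ((FreeGroup.of false) ^ 2 ^ (k + 1)))
          ((FreeGroup.of false) ^ 2 ^ (k + 1))}

/-! ### S1 : permutation infrastructure -/

abbrev LB := List Bool

/-- pairing homomorphism: act on subtrees -/
def pairFun (g : Bool → Equiv.Perm LB) : LB → LB
  | [] => []
  | c :: w => c :: g c w

lemma pairFun_comp (g h : Bool → Equiv.Perm LB) (w : LB) :
    pairFun g (pairFun h w) = pairFun (fun c => g c * h c) w := by
  cases w <;> simp [pairFun]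

def mkP (g : Bool → Equiv.Perm LB) : Equiv.Perm LB where
  toFun := pairFun g
  invFun := pairFun (fun c => (g c)⁻¹)
  left_inv := fun w => by
    rw [pairFun_comp]; cases w <;> simp [pairFun]
  right_inv := fun w => by
    rw [pairFun_comp]; cases w <;> simp [pairFun]

def P : (Bool → Equiv.Perm LB) →* Equiv.Perm LB where
  toFun := mkP
  map_one' := by
    apply Equiv.ext; intro w; cases w <;> simp [mkP, pairFun]
  map_mul' := fun g h => by
    apply Equiv.ext
    intro w
    show pairFun (fun c => g c * h c) w = pairFun g (pairFun h w)
    rw [pairFun_comp]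

lemma P_apply_cons (g : Bool → Equiv.Perm LB) (c : Bool) (w : LB) :
    P g (c :: w) = c :: g c w := rfl

lemma P_apply_nil (g : Bool → Equiv.Perm LB) : P g [] = [] := rfl

lemma P_inj : Function.Injective P := by
  intro g h hgh
  funext c
  apply Equiv.ext
  intro w
  have := congrArg (fun (p : Equiv.Perm LB) => p (c :: w)) hgh
  simpa [P_apply_cons] using this

/-- head action homomorphism -/
def headFun (σ : Equiv.Perm Bool) : LB → LB
  | [] => []
  | c :: w => σ c :: w

def hP : Equiv.Perm Bool →* Equiv.Perm LB where
  toFun σ :=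
    { toFun := headFun σ
      invFun := headFun σ⁻¹
      left_inv := fun w => by cases w <;> simp [headFun]
      right_inv := fun w => by cases w <;> simp [headFun] }
  map_one' := by ext w; cases w <;> simp [headFun]
  map_mul' := fun σ τ => by
    ext w; cases w <;> simp [headFun]

lemma hP_apply_cons (σ : Equiv.Perm Bool) (c : Bool) (w : LB) :
    hP σ (c :: w) = σ c :: w := rfl

/-- the basic conjugation relation -/
lemma hP_conj (σ : Equiv.Perm Bool) (g : Bool → Equiv.Perm LB) :
    hP σ * P g * (hP σ)⁻¹ = P (fun c => g (σ⁻¹ c)) := by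
  apply Equiv.ext
  intro w
  cases w with
  | nil => rfl
  | cons c w =>
    simp only [Equiv.Perm.mul_apply, ← map_inv]
    rw [hP_apply_cons, P_apply_cons, hP_apply_cons, show σ (σ⁻¹ c) = c from Equiv.apply_symm_apply σ c,
      P_apply_cons]

def sw : Equiv.Perm Bool :=
  ⟨Bool.not, Bool.not, fun c => by cases c <;> rfl, fun c => by cases c <;> rfl⟩

@[simp] lemma sw_apply (c : Bool) : sw c = !c := rfl
@[simp] lemma sw_inv : sw⁻¹ = sw := rfl
@[simp] lemma sw_mul_sw : sw * sw = 1 := by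
  apply Equiv.ext; intro c; cases c <;> rfl

lemma a_eq : a = P (fun c => cond c b 1) * hP sw := by
  apply Equiv.ext
  intro w
  match w with
  | [] => rfl
  | false :: w => rfl
  | true :: w => rfl

lemma b_eq : b = P (fun c => cond c 1 a) := by
  apply Equiv.ext
  intro w
  match w with
  | [] => rfl
  | false :: w => rfl
  | true :: w => rfl


/-! ### S2 : the wreath recursion -/

abbrev F := FreeGroup Bool

notation "xx" => FreeGroup.of false
notation "yy" => FreeGroup.of true

def permAut : Equiv.Perm Bool →* MulAut (Bool → F) where
  toFun σ :=
    { toFun := fun n c => n (σ⁻¹ c)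
      invFun := fun n c => n (σ c)
      left_inv := fun n => by funext c; simp
      right_inv := fun n => by funext c; simp
      map_mul' := fun n m => rfl }
  map_one' := by
    apply MulEquiv.ext; intro n; funext c; simp
  map_mul' := fun σ τ => by
    apply MulEquiv.ext; intro n; funext c
    simp [mul_inv_rev, Equiv.Perm.mul_apply]

abbrev W := SemidirectProduct (Bool → F) (Equiv.Perm Bool) permAut

def Phi : F →* W :=
  FreeGroup.lift (fun c =>
    cond c (⟨fun c' => cond c' 1 xx, 1⟩ : W) ⟨fun c' => cond c' yy 1, sw⟩)

def pi : F →* Equiv.Perm LB := FreeGroup.lift (fun c => cond c b a)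

def f1 : (Bool → F) →* Equiv.Perm LB := P.comp (MonoidHom.compLeft pi Bool)

lemma f1_apply (n : Bool → F) : f1 n = P (fun c => pi (n c)) := rfl

def Theta : W →* Equiv.Perm LB :=
  SemidirectProduct.lift f1 hP (by
    intro σ
    apply MonoidHom.ext; intro n
    simp only [MonoidHom.comp_apply, MulEquiv.coe_toMonoidHom, MulAut.conj_apply]
    show (P fun c => pi (n (σ⁻¹ c))) = _
    rw [← hP_conj σ (fun c => pi (n c))]
    rfl)

lemma Theta_mk (n : Bool → F) (h : Equiv.Perm Bool) :
    Theta ⟨n, h⟩ = P (fun c => pi (n c)) * hP h := rfl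

/-! ### S3 : substitution homomorphisms and vanishing of the relators -/

def SS : F →* F := FreeGroup.lift (fun c => cond c (xx * xx) yy)
def EE : F →* F := FreeGroup.lift (fun c => cond c yy 1)
def cH : F →* F := (MulAut.conj xx⁻¹).toMonoidHom.comp SS

@[simp] lemma SS_x : SS xx = yy := by simp [SS]
@[simp] lemma SS_y : SS yy = xx * xx := by simp [SS]
@[simp] lemma EE_x : EE xx = 1 := by simp [EE]
@[simp] lemma EE_y : EE yy = yy := by simp [EE]
@[simp] lemma pi_x : pi xx = a := by simp [pi]
@[simp] lemma pi_y : pi yy = b := by simp [pi]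

@[simp] lemma permAut_apply (σ : Equiv.Perm Bool) (n : Bool → F) (c : Bool) :
    permAut σ n c = n (σ⁻¹ c) := rfl

lemma cH_apply (m : F) : cH m = xx⁻¹ * SS m * xx := by
  simp [cH]

lemma Phi_x : Phi xx = ⟨fun c' => cond c' yy 1, sw⟩ := by simp [Phi]
lemma Phi_y : Phi yy = ⟨fun c' => cond c' 1 xx, 1⟩ := by simp [Phi]

lemma Wmul (n₁ n₂ : Bool → F) (h₁ h₂ : Equiv.Perm Bool) :
    (⟨n₁, h₁⟩ : W) * ⟨n₂, h₂⟩ = ⟨fun c => n₁ c * n₂ (h₁⁻¹ c), h₁ * h₂⟩ := rfl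

lemma Winv (n : Bool → F) (h : Equiv.Perm Bool) :
    (⟨n, h⟩ : W)⁻¹ = ⟨fun c => (n (h c))⁻¹, h⁻¹⟩ := by
  have : (⟨n, h⟩ : W)⁻¹ = ⟨fun c => (n (h⁻¹⁻¹ c))⁻¹, h⁻¹⟩ := rfl
  simpa using this

lemma Wone : (1 : W) = ⟨fun _ => 1, 1⟩ := rfl

def jH : F →* W where
  toFun w := ⟨fun c => cond c (EE w) w, 1⟩
  map_one' := by
    apply SemidirectProduct.ext
    · funext c; cases c <;> simp
    · rfl
  map_mul' := fun u v => by
    rw [Wmul]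
    apply SemidirectProduct.ext
    · funext c; cases c <;> simp
    · simp

lemma Phi_SS : Phi.comp SS = jH := by
  apply FreeGroup.ext_hom
  intro c
  cases c
  · show Phi (SS xx) = jH xx
    rw [SS_x, Phi_y]
    apply SemidirectProduct.ext
    · funext c; cases c <;> simp [jH]
    · rfl
  · show Phi (SS yy) = jH yy
    rw [SS_y, map_mul, Phi_x, Wmul]
    apply SemidirectProduct.ext
    · funext c; cases c <;> simp [jH]
    · simp [jH]

lemma pi_eq : pi = Theta.comp Phi := by
  apply FreeGroup.ext_hom
  intro c
  cases c
  · show pi xx = Theta (Phi xx)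
    rw [pi_x, Phi_x, Theta_mk, a_eq]
    congr 1
    apply congrArg
    funext c; cases c <;> simp
  · show pi yy = Theta (Phi yy)
    rw [pi_y, Phi_y, Theta_mk, b_eq]
    have : hP 1 = 1 := map_one hP
    rw [this, mul_one]
    apply congrArg
    funext c; cases c <;> simp

lemma pi_SS (w : F) : pi (SS w) = P (fun c => cond c (pi (EE w)) (pi w)) := by
  have h1 : Phi (SS w) = jH w := by
    have := congrArg (fun (f : F →* W) => f w) Phi_SS
    simpa using this
  have : pi (SS w) = Theta (Phi (SS w)) := by rw [pi_eq]; rfl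
  rw [this, h1]
  show Theta ⟨fun c => cond c (EE w) w, 1⟩ = _
  rw [Theta_mk, map_one, mul_one]
  apply congrArg
  funext c; cases c <;> simp

/-- the relators -/
def R1 (k : ℕ) : F :=
  pbr (pbr ((FreeGroup.of false) ^ 2 ^ k) ((FreeGroup.of true) ^ 2 ^ k))
    ((FreeGroup.of true) ^ 2 ^ k)

def R2 (k : ℕ) : F :=
  pbr (pbr ((FreeGroup.of true) ^ 2 ^ k) ((FreeGroup.of false) ^ 2 ^ (k + 1)))
    ((FreeGroup.of false) ^ 2 ^ (k + 1))

lemma map_pbr {G : Type*} [Group G] (f : F →* G) (u v : F) :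
    f (pbr u v) = (f u)⁻¹ * (f v)⁻¹ * f u * f v := by
  simp [pbr]


lemma SS_xpow (n : ℕ) : SS ((FreeGroup.of false : F) ^ n) = (FreeGroup.of true : F) ^ n := by
  rw [map_pow]; rfl

lemma SS_ypow (n : ℕ) : SS ((FreeGroup.of true : F) ^ n) = (FreeGroup.of false : F) ^ (2 * n) := by
  rw [map_pow]
  show (SS yy) ^ n = _
  rw [SS_y, ← pow_two, ← pow_mul]

lemma SS_R1 (k : ℕ) : SS (R1 k) = R2 k := by
  rw [R1, R2, pbr, pbr, pbr, pbr]
  simp only [map_mul, map_inv, SS_xpow, SS_ypow]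
  have h2 : (2 : ℕ) * 2 ^ k = 2 ^ (k + 1) := by rw [pow_succ, mul_comm]
  rw [h2]

lemma SS_R2 (k : ℕ) : SS (R2 k) = R1 (k + 1) := by
  rw [R1, R2, pbr, pbr, pbr, pbr]
  simp only [map_mul, map_inv, SS_xpow, SS_ypow]
  have h2 : (2 : ℕ) * 2 ^ k = 2 ^ (k + 1) := by rw [pow_succ, mul_comm]
  rw [h2]

lemma EE_R1 (k : ℕ) : EE (R1 k) = 1 := by
  rw [R1, pbr, pbr]
  simp only [map_mul, map_inv, map_pow, EE_x, EE_y]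
  group

lemma EE_R2 (k : ℕ) : EE (R2 k) = 1 := by
  rw [R2, pbr, pbr]
  simp only [map_mul, map_inv, map_pow, EE_x, EE_y]
  group

lemma Phi_r0 : Phi (R1 0) = 1 := by
  rw [R1, pbr, pbr]
  simp only [pow_zero, pow_one, map_mul, map_inv]
  rw [Phi_x, Phi_y]
  apply SemidirectProduct.ext
  · funext c
    cases c <;>
      simp [SemidirectProduct.mul_left, SemidirectProduct.inv_left,
        SemidirectProduct.mul_right, SemidirectProduct.inv_right,
        Equiv.Perm.mul_apply]
  · simp [SemidirectProduct.mul_right, SemidirectProduct.inv_right]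

lemma pi_R (k : ℕ) : pi (R1 k) = 1 ∧ pi (R2 k) = 1 := by
  induction k with
  | zero =>
    have h1 : pi (R1 0) = 1 := by
      rw [pi_eq]
      show Theta (Phi (R1 0)) = 1
      rw [Phi_r0, map_one]
    refine ⟨h1, ?_⟩
    rw [← SS_R1, pi_SS, EE_R1, h1, map_one]
    have : (fun c => cond c (1 : Equiv.Perm LB) 1) = 1 := by funext c; cases c <;> rfl
    rw [this, map_one]
  | succ k ih =>
    have h1 : pi (R1 (k + 1)) = 1 := by
      rw [← SS_R2, pi_SS, EE_R2, ih.2, map_one]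
      have : (fun c => cond c (1 : Equiv.Perm LB) 1) = 1 := by funext c; cases c <;> rfl
      rw [this, map_one]
    refine ⟨h1, ?_⟩
    rw [← SS_R1, pi_SS, EE_R1, h1, map_one]
    have : (fun c => cond c (1 : Equiv.Perm LB) 1) = 1 := by funext c; cases c <;> rfl
    rw [this, map_one]

/-! ### S4 : the presented group and consequences of the relators -/

abbrev GP := PresentedGroup GamRels

def q : F →* GP := PresentedGroup.mk GamRels

def XG : GP := q xx
def YG : GP := q yy
def X2 : GP := XG * XG

lemma q_rel {r : F} (h : r ∈ GamRels) : q r = 1 :=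
  (QuotientGroup.eq_one_iff r).mpr (Subgroup.subset_normalClosure h)

lemma R1_mem (k : ℕ) : R1 k ∈ GamRels := ⟨k, Or.inl rfl⟩
lemma R2_mem (k : ℕ) : R2 k ∈ GamRels := ⟨k, Or.inr rfl⟩

lemma commute_of_pbr {G : Type*} [Group G] {u v : G} (h : u⁻¹ * v⁻¹ * u * v = 1) :
    Commute u v := by
  rw [commute_iff_eq]
  have h2 := congrArg (fun z => v * u * z) h
  simpa [mul_assoc] using h2

/-- conjugating by a commuting element -/
lemma cds {G : Type*} [Group G] {u v : G} (h : Commute u v) : v⁻¹ * u * v = u := by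
  rw [mul_assoc, h.eq, inv_mul_cancel_left]

lemma cds' {G : Type*} [Group G] {u v : G} (h : Commute u v) : v * u * v⁻¹ = u := by
  have := cds h.inv_right
  simpa using this

lemma commute_conj {G : Type*} [Group G] {u v : G} (g : G) (h : Commute u v) :
    Commute (g⁻¹ * u * g) (g⁻¹ * v * g) := by
  have := h.map (MulAut.conj g⁻¹).toMonoidHom
  simpa [MulAut.conj_apply, mul_assoc] using this

lemma commute_unconj {G : Type*} [Group G] {u v : G} (g : G)
    (h : Commute (g⁻¹ * u * g) (g⁻¹ * v * g)) : Commute u v := by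
  have h2 := commute_conj g⁻¹ h
  have e : ∀ w : G, g⁻¹⁻¹ * (g⁻¹ * w * g) * g⁻¹ = w := by intro w; group
  rwa [e u, e v] at h2

/-- consequence of the first relator: `y` commutes with `x⁻¹yx` -/
lemma h1G : Commute YG (XG⁻¹ * YG * XG) := by
  have h0 := q_rel (R1_mem 0)
  rw [R1, map_pbr, map_pbr] at h0
  simp only [pow_zero, pow_one] at h0
  have hc : Commute (XG⁻¹ * YG⁻¹ * XG * YG) YG := commute_of_pbr (by
    show (XG⁻¹ * YG⁻¹ * XG * YG)⁻¹ * YG⁻¹ * (XG⁻¹ * YG⁻¹ * XG * YG) * YG = 1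
    rw [show (XG⁻¹ * YG⁻¹ * XG * YG)⁻¹ * YG⁻¹ * (XG⁻¹ * YG⁻¹ * XG * YG) * YG
      = ((q xx)⁻¹ * (q yy)⁻¹ * q xx * q yy)⁻¹ * (q yy)⁻¹ *
        ((q xx)⁻¹ * (q yy)⁻¹ * q xx * q yy) * q yy from rfl]
    exact h0)
  have h2 : Commute (XG⁻¹ * YG⁻¹ * XG) YG := by
    have h3 := Commute.mul_left hc ((Commute.refl YG).inv_left)
    have he : XG⁻¹ * YG⁻¹ * XG * YG * YG⁻¹ = XG⁻¹ * YG⁻¹ * XG := by group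
    rwa [he] at h3
  have h4 := h2.inv_left
  have he : (XG⁻¹ * YG⁻¹ * XG)⁻¹ = XG⁻¹ * YG * XG := by group
  rw [he] at h4
  exact h4.symm

def dG : GP := YG⁻¹ * (X2⁻¹ * YG * X2)

/-- consequence of the second relator: `[y,x²]` commutes with `x²` -/
lemma h2G : Commute dG X2 := by
  have h0 := q_rel (R2_mem 0)
  rw [R2, map_pbr, map_pbr] at h0
  have e1 : ((FreeGroup.of true : F) ^ 2 ^ 0) = yy := by norm_num
  have e2 : ((FreeGroup.of false : F) ^ 2 ^ (0 + 1)) = xx * xx := by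
    norm_num; rw [pow_two]
  rw [e1, e2] at h0
  apply commute_of_pbr
  show dG⁻¹ * X2⁻¹ * dG * X2 = 1
  have hd : dG = (q yy)⁻¹ * (q (xx * xx))⁻¹ * q yy * q (xx * xx) := by
    rw [dG, X2]; simp only [XG, YG, map_mul]; group
  have hx2 : X2 = q (xx * xx) := by rw [X2, XG, map_mul]
  rw [hd, hx2]
  simpa [mul_assoc] using h0

lemma X2Y : X2⁻¹ * YG * X2 = YG * dG := by rw [dG]; group

lemma X2Y' : X2 * YG * X2⁻¹ = YG * dG⁻¹ := by
  have h := congrArg (fun z => X2 * z * (dG⁻¹ * X2⁻¹)) X2Y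
  have e2 : X2 * (X2⁻¹ * YG * X2) * (dG⁻¹ * X2⁻¹) = YG * (X2 * dG⁻¹ * X2⁻¹) := by group
  have e3 : X2 * (YG * dG) * (dG⁻¹ * X2⁻¹) = X2 * YG * X2⁻¹ := by group
  rw [e2, e3] at h
  rw [← h, cds' h2G.inv_left]

lemma uYGn (n : ℕ) : (X2 ^ n)⁻¹ * YG * X2 ^ n = YG * dG ^ n := by
  induction n with
  | zero => simp
  | succ n ih =>
    rw [pow_succ]
    have e : (X2 ^ n * X2)⁻¹ * YG * (X2 ^ n * X2)
        = X2⁻¹ * ((X2 ^ n)⁻¹ * YG * X2 ^ n) * X2 := by group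
    rw [e, ih]
    have e2 : X2⁻¹ * (YG * dG ^ n) * X2
        = (X2⁻¹ * YG * X2) * (X2⁻¹ * dG ^ n * X2) := by group
    rw [e2, X2Y, cds (h2G.pow_left n), pow_succ]
    group

lemma uYGneg (n : ℕ) : (X2 ^ n) * YG * (X2 ^ n)⁻¹ = YG * (dG⁻¹) ^ n := by
  induction n with
  | zero => simp
  | succ n ih =>
    rw [pow_succ]
    have e : (X2 ^ n * X2) * YG * (X2 ^ n * X2)⁻¹
        = X2 ^ n * (X2 * YG * X2⁻¹) * (X2 ^ n)⁻¹ := by group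
    rw [e, X2Y']
    have e2 : X2 ^ n * (YG * dG⁻¹) * (X2 ^ n)⁻¹
        = (X2 ^ n * YG * (X2 ^ n)⁻¹) * (X2 ^ n * dG⁻¹ * (X2 ^ n)⁻¹) := by group
    rw [e2, ih, cds' ((h2G.inv_left).pow_right n), pow_succ]
    group

lemma uYGz (i : ℤ) : (X2 ^ i)⁻¹ * YG * X2 ^ i = YG * dG ^ i := by
  induction i using Int.induction_on with
  | zero => simp
  | succ n _ =>
    have en : ((n : ℤ) + 1) = ((n + 1 : ℕ) : ℤ) := by push_cast; ring
    rw [en, zpow_natCast, zpow_natCast, uYGn]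
  | pred n _ =>
    have en : (-(n : ℤ) - 1) = -((n + 1 : ℕ) : ℤ) := by push_cast; ring
    rw [en, zpow_neg, zpow_natCast, zpow_neg, zpow_natCast, inv_inv, uYGneg, inv_pow]

/-- `y` commutes with `x⁻³yx³` -/
lemma Q1 : Commute YG (XG⁻¹ * (X2⁻¹ * YG * X2) * XG) := by
  apply commute_unconj XG
  have e1 : XG⁻¹ * (XG⁻¹ * (X2⁻¹ * YG * X2) * XG) * XG
      = (X2 * X2)⁻¹ * YG * (X2 * X2) := by
    rw [X2]; group
  rw [e1, show X2 * X2 = X2 ^ (2:ℕ) from (pow_two X2).symm, uYGn]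
  have hYX : Commute (XG⁻¹ * YG * XG) YG := h1G.symm
  have hYX2 : Commute (XG⁻¹ * YG * XG) (X2⁻¹ * YG * X2) := by
    have h := commute_conj XG h1G
    have e : XG⁻¹ * (XG⁻¹ * YG * XG) * XG = X2⁻¹ * YG * X2 := by rw [X2]; group
    rwa [e] at h
  have hYXd : Commute (XG⁻¹ * YG * XG) dG := by
    rw [dG]
    exact (hYX.inv_right).mul_right hYX2
  exact hYX.mul_right (hYXd.pow_right 2)

/-- `y` commutes with all odd conjugates `x^{-(2j+1)} y x^{2j+1}` -/
lemma QJ (j : ℤ) : Commute YG ((X2 ^ j)⁻¹ * (XG⁻¹ * YG * XG) * X2 ^ j) := by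
  have hXX2 : Commute XG X2 := by rw [X2]; exact (Commute.refl XG).mul_right (Commute.refl XG)
  have e : (X2 ^ j)⁻¹ * (XG⁻¹ * YG * XG) * X2 ^ j
      = XG⁻¹ * ((X2 ^ j)⁻¹ * YG * X2 ^ j) * XG := by
    have h := (hXX2.zpow_right j).eq
    calc (X2 ^ j)⁻¹ * (XG⁻¹ * YG * XG) * X2 ^ j
        = (X2 ^ j)⁻¹ * XG⁻¹ * YG * (XG * X2 ^ j) := by group
      _ = (X2 ^ j)⁻¹ * XG⁻¹ * YG * (X2 ^ j * XG) := by rw [h]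
      _ = ((XG * X2 ^ j)⁻¹ * YG * X2 ^ j) * XG := by group
      _ = ((X2 ^ j * XG)⁻¹ * YG * X2 ^ j) * XG := by rw [h]
      _ = XG⁻¹ * ((X2 ^ j)⁻¹ * YG * X2 ^ j) * XG := by group
  rw [e, uYGz]
  have e2 : XG⁻¹ * (YG * dG ^ j) * XG
      = (XG⁻¹ * YG * XG) * (XG⁻¹ * dG ^ j * XG) := by group
  rw [e2]
  refine h1G.mul_right ?_
  have e3 : XG⁻¹ * dG ^ j * XG = (XG⁻¹ * dG * XG) ^ j := by
    rw [show XG⁻¹ * dG * XG = XG⁻¹ * dG * XG⁻¹⁻¹ from by group, conj_zpow]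
    group
  rw [e3]
  apply Commute.zpow_right
  rw [dG]
  have e4 : XG⁻¹ * (YG⁻¹ * (X2⁻¹ * YG * X2)) * XG
      = (XG⁻¹ * YG * XG)⁻¹ * (XG⁻¹ * (X2⁻¹ * YG * X2) * XG) := by group
  rw [e4]
  exact (h1G.inv_right).mul_right Q1

/-! ### S4b : the kernel of the `y`-degree, and the key commutation lemmas -/

def dH : F →* Multiplicative ℤ :=
  FreeGroup.lift (fun c => cond c (Multiplicative.ofAdd 1) 1)

def deg (w : F) : ℤ := Multiplicative.toAdd (dH w)

@[simp] lemma deg_x : deg xx = 0 := by simp [deg, dH]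
@[simp] lemma deg_y : deg yy = 1 := by simp [deg, dH]
@[simp] lemma deg_one : deg (1 : F) = 0 := by simp [deg]
@[simp] lemma deg_mul (u v : F) : deg (u * v) = deg u + deg v := by simp [deg]
@[simp] lemma deg_inv (u : F) : deg u⁻¹ = - deg u := by simp [deg]

lemma EE_deg : ∀ w : F, EE w = yy ^ (deg w) := by
  intro w
  induction w using FreeGroup.induction_on with
  | C1 => simp
  | of c =>
    cases c
    · show EE xx = yy ^ (deg xx); simp
    · show EE yy = yy ^ (deg yy); simp
  | inv_of c ih =>
    cases c
    · show EE xx⁻¹ = yy ^ (deg xx⁻¹); simp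
    · show EE yy⁻¹ = yy ^ (deg yy⁻¹); simp
  | mul u v hu hv =>
    rw [map_mul, hu, hv, deg_mul, zpow_add]

lemma deg_EE (w : F) : deg (EE w) = deg w := by
  have h : dH.comp EE = dH := by
    apply FreeGroup.ext_hom
    intro c
    cases c <;> simp [MonoidHom.comp_apply, dH]
  have h2 : dH (EE w) = dH w := by rw [← MonoidHom.comp_apply, h]
  show Multiplicative.toAdd (dH (EE w)) = deg w
  rw [h2]; rfl

/-- generators `x^{y^j}` of the kernel of `EE` -/
def tG : Set F := Set.range (fun j : ℤ => (yy ^ j)⁻¹ * xx * yy ^ j)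

def T : Subgroup F := Subgroup.closure tG

lemma T_conjY (k : ℤ) {g : F} (hg : g ∈ T) : (yy ^ k)⁻¹ * g * yy ^ k ∈ T := by
  induction hg using Subgroup.closure_induction with
  | mem s hs =>
    rcases hs with ⟨j, rfl⟩
    apply Subgroup.subset_closure
    refine ⟨j + k, ?_⟩
    show (yy ^ (j + k))⁻¹ * xx * yy ^ (j + k)
      = (yy ^ k)⁻¹ * ((yy ^ j)⁻¹ * xx * yy ^ j) * yy ^ k
    rw [zpow_add]
    group
  | one => simpa using one_mem T
  | mul g₁ g₂ h₁ h₂ ih₁ ih₂ =>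
    have e : (yy ^ k)⁻¹ * (g₁ * g₂) * yy ^ k
        = ((yy ^ k)⁻¹ * g₁ * yy ^ k) * ((yy ^ k)⁻¹ * g₂ * yy ^ k) := by group
    rw [e]; exact mul_mem ih₁ ih₂
  | inv g₁ h₁ ih =>
    have e : (yy ^ k)⁻¹ * g₁⁻¹ * yy ^ k = ((yy ^ k)⁻¹ * g₁ * yy ^ k)⁻¹ := by group
    rw [e]; exact inv_mem ih

lemma memT : ∀ w : F, w * (yy ^ (deg w))⁻¹ ∈ T := by
  intro w
  induction w using FreeGroup.induction_on with
  | C1 => simpa using one_mem T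
  | of c =>
    cases c
    · show xx * (yy ^ (deg xx))⁻¹ ∈ T
      simp only [deg_x, zpow_zero, inv_one, mul_one]
      exact Subgroup.subset_closure ⟨0, by simp⟩
    · show yy * (yy ^ (deg yy))⁻¹ ∈ T
      simpa using one_mem T
  | inv_of c ih =>
    cases c
    · show xx⁻¹ * (yy ^ (deg xx⁻¹))⁻¹ ∈ T
      simp only [deg_inv, deg_x, neg_zero, zpow_zero, inv_one, mul_one]
      exact inv_mem (Subgroup.subset_closure ⟨0, by simp⟩)
    · show yy⁻¹ * (yy ^ (deg yy⁻¹))⁻¹ ∈ T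
      simpa using one_mem T
  | mul u v hu hv =>
    have e : u * v * (yy ^ (deg (u * v)))⁻¹
        = (u * (yy ^ deg u)⁻¹) *
          ((yy ^ (- deg u))⁻¹ * (v * (yy ^ deg v)⁻¹) * yy ^ (- deg u)) := by
      rw [deg_mul, zpow_add, zpow_neg]
      group
    rw [e]
    exact mul_mem hu (T_conjY (- deg u) hv)

lemma mem_T_of_EE {m : F} (hm : EE m = 1) : m ∈ T := by
  have h0 : deg m = 0 := by
    have h := deg_EE m
    rw [hm] at h
    simpa using h.symm
  have h2 := memT m
  rw [h0] at h2
  simpa using h2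

lemma cH_x : cH xx = xx⁻¹ * yy * xx := by rw [cH_apply, SS_x]
lemma cH_y : cH yy = xx * xx := by rw [cH_apply, SS_y]; group

/-- key commutation lemma: `y` commutes with the image of the kernel of `EE`
under the right-coordinate embedding -/
lemma KCx {m : F} (hm : EE m = 1) : Commute YG (q (cH m)) := by
  have hle : T ≤ Subgroup.comap (q.comp cH) (Subgroup.centralizer {YG}) := by
    rw [T, Subgroup.closure_le]
    rintro s ⟨j, rfl⟩
    show (q.comp cH) ((yy ^ j)⁻¹ * xx * yy ^ j) ∈ Subgroup.centralizer {YG}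
    have e : (q.comp cH) ((yy ^ j)⁻¹ * xx * yy ^ j)
        = (X2 ^ j)⁻¹ * (XG⁻¹ * YG * XG) * X2 ^ j := by
      simp only [MonoidHom.comp_apply, map_mul, map_inv, map_zpow, cH_x, cH_y]
      rfl
    rw [e]
    rw [Subgroup.mem_centralizer_iff]
    intro h hh
    rw [Set.mem_singleton_iff] at hh
    subst hh
    exact (QJ j).eq
  have := hle (mem_T_of_EE hm)
  rw [Subgroup.mem_comap, Subgroup.mem_centralizer_iff] at this
  exact this YG rfl

/-- exact form of the second key lemma -/
def conjH (g : F) : F →* F where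
  toFun := fun m => g⁻¹ * m * g
  map_one' := by group
  map_mul' := fun m n => by group

@[simp] lemma conjH_apply (g m : F) : conjH g m = g⁻¹ * m * g := rfl

lemma KCyF {m : F} (hm : EE m = 1) :
    cH (yy⁻¹ * m * yy) = (xx * xx)⁻¹ * cH m * (xx * xx) := by
  have hle : T ≤ (cH.comp (conjH yy)).eqLocus ((conjH (xx * xx)).comp cH) := by
    rw [T, Subgroup.closure_le]
    rintro s ⟨j, rfl⟩
    show (cH.comp (conjH yy)) ((yy ^ j)⁻¹ * xx * yy ^ j)
      = ((conjH (xx * xx)).comp cH) ((yy ^ j)⁻¹ * xx * yy ^ j)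
    simp only [MonoidHom.comp_apply, conjH_apply, map_mul, map_inv, map_zpow, cH_x, cH_y]
    group
  have h := hle (mem_T_of_EE hm)
  have h2 : (cH.comp (conjH yy)) m = ((conjH (xx * xx)).comp cH) m := h
  simpa only [MonoidHom.comp_apply, conjH_apply] using h2

/-! kernel transport lemmas -/

lemma SS_rels {r : F} (h : r ∈ GamRels) : SS r ∈ GamRels := by
  rcases h with ⟨k, h | h⟩
  · refine ⟨k, Or.inr ?_⟩
    rw [h]
    show SS (R1 k) = R2 k
    exact SS_R1 k
  · refine ⟨k + 1, Or.inl ?_⟩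
    rw [h]
    show SS (R2 k) = R1 (k + 1)
    exact SS_R2 k

lemma q_ker_SS {w : F} (h : q w = 1) : q (SS w) = 1 := by
  have hw : w ∈ Subgroup.normalClosure GamRels := (QuotientGroup.eq_one_iff w).mp h
  have hle : Subgroup.normalClosure GamRels ≤ (q.comp SS).ker := by
    apply Subgroup.normalClosure_le_normal
    intro r hr
    rw [SetLike.mem_coe, MonoidHom.mem_ker, MonoidHom.comp_apply]
    exact q_rel (SS_rels hr)
  have := hle hw
  rwa [MonoidHom.mem_ker, MonoidHom.comp_apply] at this

lemma EE_ker {w : F} (h : q w = 1) : EE w = 1 := by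
  have hw : w ∈ Subgroup.normalClosure GamRels := (QuotientGroup.eq_one_iff w).mp h
  have hle : Subgroup.normalClosure GamRels ≤ EE.ker := by
    apply Subgroup.normalClosure_le_normal
    intro r hr
    rw [SetLike.mem_coe, MonoidHom.mem_ker]
    rcases hr with ⟨k, h | h⟩
    · rw [h]; show EE (R1 k) = 1; exact EE_R1 k
    · rw [h]; show EE (R2 k) = 1; exact EE_R2 k
  have := hle hw
  rwa [MonoidHom.mem_ker] at this

lemma q_cH_ker {w : F} (h : q w = 1) : q (cH w) = 1 := by
  rw [cH_apply, map_mul, map_mul, q_ker_SS h, map_inv]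
  simp

/-! ### S5 : word-level sections -/

/-- the letter `(c,s)` as a group element -/
def gen (c : Bool) (s : Bool) : F := cond s (FreeGroup.of c) (FreeGroup.of c)⁻¹

lemma mk_app (L : List (Bool × Bool)) (c s : Bool) :
    FreeGroup.mk (L ++ [(c, s)]) = FreeGroup.mk L * gen c s := by
  rw [← FreeGroup.mul_mk]
  congr 1
  cases s
  · show FreeGroup.mk [(c, false)] = (FreeGroup.of c)⁻¹
    rw [show (FreeGroup.of c : F) = FreeGroup.mk [(c, true)] from rfl, FreeGroup.inv_mk]
    rfl
  · rfl

/-- one step of the section computation -/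
def stStep : List (Bool × Bool) × List (Bool × Bool) × Bool → Bool × Bool →
    List (Bool × Bool) × List (Bool × Bool) × Bool
  | (W0, W1, t), (false, s) =>
      if t then (if s then (W0 ++ [(true, true)], W1, false) else (W0, W1 ++ [(true, false)], false))
      else (if s then (W0, W1 ++ [(true, true)], true) else (W0 ++ [(true, false)], W1, true))
  | (W0, W1, t), (true, s) =>
      if t then (W0, W1 ++ [(false, s)], true) else (W0 ++ [(false, s)], W1, false)

def st (L : List (Bool × Bool)) : List (Bool × Bool) × List (Bool × Bool) × Bool :=
  L.foldl stStep ([], [], false)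

lemma st_app (L : List (Bool × Bool)) (e : Bool × Bool) :
    st (L ++ [e]) = stStep (st L) e := by
  rw [st, List.foldl_append]
  rfl

lemma st_nil : st [] = ([], [], false) := rfl

lemma st_len (L : List (Bool × Bool)) :
    (st L).1.length + (st L).2.1.length = L.length := by
  induction L using List.reverseRecOn with
  | nil => rfl
  | append_singleton l e ih =>
    rcases e with ⟨ec, es⟩
    rw [st_app]
    rcases hst : st l with ⟨W0, W1, t⟩
    rw [hst] at ih
    simp only at ih
    cases ec <;> cases es <;> cases t <;>
      simp [stStep, List.length_append] <;> omega

lemma Phi_xinv : Phi (xx⁻¹) = ⟨fun c => cond c 1 yy⁻¹, sw⟩ := by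
  rw [map_inv, Phi_x, Winv]
  apply SemidirectProduct.ext
  · funext c; cases c <;> simp
  · simp

lemma Phi_yinv : Phi (yy⁻¹) = ⟨fun c => cond c 1 xx⁻¹, 1⟩ := by
  rw [map_inv, Phi_y, Winv]
  apply SemidirectProduct.ext
  · funext c; cases c <;> simp
  · simp

lemma Phi_st (L : List (Bool × Bool)) :
    Phi (FreeGroup.mk L) =
      ⟨fun c => cond c (FreeGroup.mk (st L).2.1) (FreeGroup.mk (st L).1),
        cond (st L).2.2 sw 1⟩ := by
  induction L using List.reverseRecOn with
  | nil =>
    rw [show FreeGroup.mk ([] : List (Bool × Bool)) = 1 from FreeGroup.one_eq_mk.symm, map_one]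
    apply SemidirectProduct.ext
    · funext c; cases c <;> rfl
    · rfl
  | append_singleton l e ih =>
    rcases e with ⟨ec, es⟩
    rw [mk_app, map_mul, ih, st_app]
    rcases hst : st l with ⟨W0, W1, t⟩
    simp only
    cases ec <;> cases es <;> cases t <;>
      · simp only [stStep, gen, cond]
        first
        | rw [show Phi (FreeGroup.of false : F) = Phi xx from rfl, Phi_x]
        | rw [show Phi ((FreeGroup.of false : F))⁻¹ = Phi (xx⁻¹) from rfl, Phi_xinv]
        | rw [show Phi (FreeGroup.of true : F) = Phi yy from rfl, Phi_y]
        | rw [show Phi ((FreeGroup.of true : F))⁻¹ = Phi (yy⁻¹) from rfl, Phi_yinv]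
        rw [Wmul]
        apply SemidirectProduct.ext
        · funext c; cases c <;> simp [mk_app, gen]
        · simp

/-! ### S6 : degenerate sections -/

lemma degen1 (L : List (Bool × Bool)) (h : (st L).2.1 = []) :
    ∃ k : ℤ, FreeGroup.mk L = yy ^ k * (cond (st L).2.2 xx⁻¹ 1) := by
  induction L using List.reverseRecOn with
  | nil =>
    refine ⟨0, ?_⟩
    rw [st_nil]
    rw [zpow_zero]
    show FreeGroup.mk [] = 1 * 1
    rw [← FreeGroup.one_eq_mk, mul_one]
  | append_singleton l e ih =>
    rcases e with ⟨ec, es⟩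
    rw [st_app] at h ⊢
    rcases hst : st l with ⟨W0, W1, t⟩
    rw [hst] at h ih
    rw [mk_app]
    cases ec
    · cases es
      · cases t
        · -- x⁻¹ at t = false, good, t' = true
          simp only [stStep, if_false, cond] at h ih ⊢
          obtain ⟨k, hmk⟩ := ih h
          rw [mul_one] at hmk
          exact ⟨k, by rw [hmk]; rfl⟩
        · -- x⁻¹ at t = true : contra
          simp [stStep] at h
      · cases t
        · -- x at t = false : contra
          simp [stStep] at h
        · -- x at t = true : good, t' = false
          simp only [stStep, if_true, cond] at h ih ⊢
          obtain ⟨k, hmk⟩ := ih h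
          refine ⟨k, ?_⟩
          rw [hmk]
          show yy ^ k * xx⁻¹ * (gen false true) = yy ^ k * 1
          rw [gen]
          show yy ^ k * xx⁻¹ * xx = yy ^ k * 1
          group
    · cases es
      · cases t
        · -- y⁻¹ at t = false : good
          simp only [stStep, if_false, cond] at h ih ⊢
          obtain ⟨k, hmk⟩ := ih h
          rw [mul_one] at hmk
          refine ⟨k - 1, ?_⟩
          rw [hmk]
          show yy ^ k * (gen true false) = yy ^ (k - 1) * 1
          rw [gen]
          show yy ^ k * yy⁻¹ = yy ^ (k - 1) * 1
          rw [mul_one, zpow_sub_one]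
        · -- y⁻¹ at t = true : contra
          simp [stStep] at h
      · cases t
        · -- y at t = false : good
          simp only [stStep, if_false, cond] at h ih ⊢
          obtain ⟨k, hmk⟩ := ih h
          rw [mul_one] at hmk
          refine ⟨k + 1, ?_⟩
          rw [hmk]
          show yy ^ k * (gen true true) = yy ^ (k + 1) * 1
          rw [gen]
          show yy ^ k * yy = yy ^ (k + 1) * 1
          rw [mul_one, zpow_add_one]
        · -- y at t = true : contra
          simp [stStep] at h

lemma degen0 (L : List (Bool × Bool)) (h : (st L).1 = []) :
    ∃ k : ℤ, FreeGroup.mk L = xx * yy ^ k * (cond (st L).2.2 1 xx⁻¹) := by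
  induction L using List.reverseRecOn with
  | nil =>
    refine ⟨0, ?_⟩
    rw [st_nil, zpow_zero]
    show FreeGroup.mk [] = xx * 1 * xx⁻¹
    rw [← FreeGroup.one_eq_mk]
    group
  | append_singleton l e ih =>
    rcases e with ⟨ec, es⟩
    rw [st_app] at h ⊢
    rcases hst : st l with ⟨W0, W1, t⟩
    rw [hst] at h ih
    rw [mk_app]
    cases ec
    · cases es
      · cases t
        · -- x⁻¹ at t = false: appends W0 : contra
          simp [stStep] at h
        · -- x⁻¹ at t = true : good, t' = false
          simp only [stStep, if_true, cond] at h ih ⊢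
          obtain ⟨k, hmk⟩ := ih h
          rw [mul_one] at hmk
          refine ⟨k, ?_⟩
          rw [hmk]
          rfl
      · cases t
        · -- x at t = false : good, t' = true
          simp only [stStep, if_false, cond] at h ih ⊢
          obtain ⟨k, hmk⟩ := ih h
          refine ⟨k, ?_⟩
          rw [hmk]
          show xx * yy ^ k * xx⁻¹ * (gen false true) = xx * yy ^ k * 1
          rw [gen]
          show xx * yy ^ k * xx⁻¹ * xx = xx * yy ^ k * 1
          group
        · -- x at t = true : appends W0 : contra
          simp [stStep] at h
    · cases es
      · cases t
        · -- y⁻¹ at t = false : appends W0 : contra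
          simp [stStep] at h
        · -- y⁻¹ at t = true : good
          simp only [stStep, if_true, cond] at h ih ⊢
          obtain ⟨k, hmk⟩ := ih h
          rw [mul_one] at hmk
          refine ⟨k - 1, ?_⟩
          rw [hmk]
          show xx * yy ^ k * (gen true false) = xx * yy ^ (k - 1) * 1
          rw [gen]
          show xx * yy ^ k * yy⁻¹ = xx * yy ^ (k - 1) * 1
          rw [mul_one, mul_assoc, zpow_sub_one]
      · cases t
        · simp [stStep] at h
        · -- y at t = true : good
          simp only [stStep, if_true, cond] at h ih ⊢
          obtain ⟨k, hmk⟩ := ih h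
          rw [mul_one] at hmk
          refine ⟨k + 1, ?_⟩
          rw [hmk]
          show xx * yy ^ k * (gen true true) = xx * yy ^ (k + 1) * 1
          rw [gen]
          show xx * yy ^ k * yy = xx * yy ^ (k + 1) * 1
          rw [mul_one, mul_assoc, zpow_add_one]

/-! ### S7 : the master rewriting lemma -/

lemma EE_idem (w : F) : EE (EE w) = EE w := by
  rw [EE_deg w, map_zpow, EE_y]

@[simp] lemma EE_gen0 (s : Bool) : EE (gen false s) = 1 := by
  cases s <;> simp [gen]

def FQ (u v : F) : F := SS u * cH ((EE u)⁻¹ * v)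

lemma e_x0 (u v : F) : FQ u (v * yy * yy⁻¹) = FQ u v := by
  rw [mul_inv_cancel_right]

lemma e_xm0 (u v : F) : FQ (u * yy⁻¹) (v * yy⁻¹) * xx = FQ u v * xx⁻¹ := by
  unfold FQ
  rw [show (EE (u * yy⁻¹))⁻¹ * (v * yy⁻¹) = yy * ((EE u)⁻¹ * v) * yy⁻¹ from by
    simp only [map_mul, map_inv, EE_y]; group]
  simp only [map_mul, map_inv, SS_y, cH_y]
  group

lemma e_y1 (u v : F) (s : Bool) :
    FQ u (v * gen false s * yy⁻¹) * xx = FQ u (v * yy⁻¹) * xx * gen true s := by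
  cases s
  · show FQ u (v * (FreeGroup.of false)⁻¹ * yy⁻¹) * xx = FQ u (v * yy⁻¹) * xx * yy⁻¹
    unfold FQ
    rw [show (EE u)⁻¹ * (v * xx⁻¹ * yy⁻¹)
        = ((EE u)⁻¹ * (v * yy⁻¹)) * (yy * xx⁻¹ * yy⁻¹) from by group]
    simp only [map_mul, map_inv, cH_y, cH_x]
    group
  · show FQ u (v * FreeGroup.of false * yy⁻¹) * xx = FQ u (v * yy⁻¹) * xx * yy
    unfold FQ
    rw [show (EE u)⁻¹ * (v * xx * yy⁻¹)
        = ((EE u)⁻¹ * (v * yy⁻¹)) * (yy * xx * yy⁻¹) from by group]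
    simp only [map_mul, map_inv, cH_y, cH_x]
    group

lemma q_y0 (u v : F) (s : Bool) (hbal : EE v = EE u) :
    q (FQ (u * gen false s) v) = q (FQ u v) * q (gen true s) := by
  have hm : EE ((EE u)⁻¹ * v) = 1 := by
    rw [map_mul, map_inv, EE_idem, hbal]; group
  have hcomm := KCx hm
  obtain ⟨m, hmdef⟩ : ∃ m : F, (EE u)⁻¹ * v = m := ⟨_, rfl⟩
  rw [hmdef] at hcomm
  cases s
  · show q (FQ (u * (FreeGroup.of false)⁻¹) v) = q (FQ u v) * q (yy⁻¹)
    unfold FQ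
    rw [hmdef]
    rw [show (EE (u * xx⁻¹))⁻¹ * v = m from by
      rw [← hmdef]; simp only [map_mul, map_inv, EE_x]; group]
    rw [show SS (u * xx⁻¹) = SS u * yy⁻¹ from by rw [map_mul, map_inv, SS_x]]
    simp only [map_mul, map_inv]
    have h2 : (q yy)⁻¹ * q (cH m) = q (cH m) * (q yy)⁻¹ := hcomm.inv_left.eq
    rw [mul_assoc, h2, ← mul_assoc]
  · show q (FQ (u * FreeGroup.of false) v) = q (FQ u v) * q yy
    unfold FQ
    rw [hmdef]
    rw [show (EE (u * xx))⁻¹ * v = m from by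
      rw [← hmdef]; simp only [map_mul, EE_x]; group]
    rw [show SS (u * xx) = SS u * yy from by rw [map_mul, SS_x]]
    simp only [map_mul]
    have h2 : q yy * q (cH m) = q (cH m) * q yy := hcomm.eq
    rw [mul_assoc, h2, ← mul_assoc]

lemma q_x1 (u v : F) (hbal : EE v = EE u * yy) :
    q (FQ (u * yy) v) = q (FQ u (v * yy⁻¹)) * q xx * q xx := by
  have hm : EE ((EE u)⁻¹ * (v * yy⁻¹)) = 1 := by
    rw [map_mul, map_mul, map_inv, map_inv, EE_idem, EE_y, hbal]; group
  have hK := KCyF hm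
  unfold FQ
  rw [show (EE (u * yy))⁻¹ * v = yy⁻¹ * ((EE u)⁻¹ * (v * yy⁻¹)) * yy from by
    simp only [map_mul, EE_y]; group]
  rw [hK]
  simp only [map_mul, map_inv, SS_y]
  group

lemma master (L : List (Bool × Bool)) :
    EE (FreeGroup.mk (st L).2.1) = EE (FreeGroup.mk (st L).1) * cond (st L).2.2 yy 1 ∧
    q (FreeGroup.mk L) =
      cond (st L).2.2
        (q (FQ (FreeGroup.mk (st L).1) (FreeGroup.mk (st L).2.1 * yy⁻¹)) * q xx)
        (q (FQ (FreeGroup.mk (st L).1) (FreeGroup.mk (st L).2.1))) := by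
  induction L using List.reverseRecOn with
  | nil =>
    rw [st_nil, ← FreeGroup.one_eq_mk]
    constructor
    · simp
    · simp [FQ]
  | append_singleton l e ih =>
    rcases e with ⟨ec, es⟩
    rw [st_app, mk_app, map_mul]
    rcases hst : st l with ⟨W0, W1, t⟩
    rw [hst] at ih
    cases ec
    · cases es
      · cases t
        · -- x⁻¹ at t = false
          have ihb : EE (FreeGroup.mk W1) = EE (FreeGroup.mk W0) := by simpa using ih.1
          have ihe : q (FreeGroup.mk l) = q (FQ (FreeGroup.mk W0) (FreeGroup.mk W1)) := ih.2
          constructor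
          · show EE (FreeGroup.mk W1) = EE (FreeGroup.mk (W0 ++ [(true, false)])) * yy
            rw [mk_app]
            show EE (FreeGroup.mk W1) = EE (FreeGroup.mk W0 * yy⁻¹) * yy
            rw [map_mul, map_inv, EE_y, ihb]
            group
          · show q (FreeGroup.mk l) * q (xx⁻¹)
              = q (FQ (FreeGroup.mk (W0 ++ [(true, false)])) (FreeGroup.mk W1 * yy⁻¹)) * q xx
            rw [mk_app]
            show q (FreeGroup.mk l) * q (xx⁻¹)
              = q (FQ (FreeGroup.mk W0 * yy⁻¹) (FreeGroup.mk W1 * yy⁻¹)) * q xx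
            have he := congrArg q (e_xm0 (FreeGroup.mk W0) (FreeGroup.mk W1))
            rw [map_mul, map_mul] at he
            rw [he, ihe]
        · -- x⁻¹ at t = true
          have ihb : EE (FreeGroup.mk W1) = EE (FreeGroup.mk W0) * yy := ih.1
          have ihe : q (FreeGroup.mk l)
              = q (FQ (FreeGroup.mk W0) (FreeGroup.mk W1 * yy⁻¹)) * q xx := ih.2
          constructor
          · show EE (FreeGroup.mk (W1 ++ [(true, false)])) = EE (FreeGroup.mk W0) * 1
            rw [mk_app]
            show EE (FreeGroup.mk W1 * yy⁻¹) = EE (FreeGroup.mk W0) * 1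
            rw [map_mul, map_inv, EE_y, ihb]
            group
          · show q (FreeGroup.mk l) * q (xx⁻¹)
              = q (FQ (FreeGroup.mk W0) (FreeGroup.mk (W1 ++ [(true, false)])))
            rw [mk_app]
            show q (FreeGroup.mk l) * q (xx⁻¹)
              = q (FQ (FreeGroup.mk W0) (FreeGroup.mk W1 * yy⁻¹))
            rw [ihe, map_inv]
            group
      · cases t
        · -- x at t = false
          have ihb : EE (FreeGroup.mk W1) = EE (FreeGroup.mk W0) := by simpa using ih.1
          have ihe : q (FreeGroup.mk l) = q (FQ (FreeGroup.mk W0) (FreeGroup.mk W1)) := ih.2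
          constructor
          · show EE (FreeGroup.mk (W1 ++ [(true, true)])) = EE (FreeGroup.mk W0) * yy
            rw [mk_app]
            show EE (FreeGroup.mk W1 * yy) = EE (FreeGroup.mk W0) * yy
            rw [map_mul, EE_y, ihb]
          · show q (FreeGroup.mk l) * q xx
              = q (FQ (FreeGroup.mk W0) (FreeGroup.mk (W1 ++ [(true, true)]) * yy⁻¹)) * q xx
            rw [mk_app]
            show q (FreeGroup.mk l) * q xx
              = q (FQ (FreeGroup.mk W0) (FreeGroup.mk W1 * yy * yy⁻¹)) * q xx
            rw [e_x0, ihe]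
        · -- x at t = true
          have ihb : EE (FreeGroup.mk W1) = EE (FreeGroup.mk W0) * yy := ih.1
          have ihe : q (FreeGroup.mk l)
              = q (FQ (FreeGroup.mk W0) (FreeGroup.mk W1 * yy⁻¹)) * q xx := ih.2
          constructor
          · show EE (FreeGroup.mk W1) = EE (FreeGroup.mk (W0 ++ [(true, true)])) * 1
            rw [mk_app]
            show EE (FreeGroup.mk W1) = EE (FreeGroup.mk W0 * yy) * 1
            rw [map_mul, EE_y, mul_one]
            exact ihb
          · show q (FreeGroup.mk l) * q xx
              = q (FQ (FreeGroup.mk (W0 ++ [(true, true)])) (FreeGroup.mk W1))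
            rw [mk_app]
            show q (FreeGroup.mk l) * q xx
              = q (FQ (FreeGroup.mk W0 * yy) (FreeGroup.mk W1))
            rw [q_x1 _ _ ihb, ihe]
    · cases t
      · -- y^es at t = false
        have ihb : EE (FreeGroup.mk W1) = EE (FreeGroup.mk W0) := by simpa using ih.1
        have ihe : q (FreeGroup.mk l) = q (FQ (FreeGroup.mk W0) (FreeGroup.mk W1)) := ih.2
        constructor
        · show EE (FreeGroup.mk W1) = EE (FreeGroup.mk (W0 ++ [(false, es)])) * 1
          rw [mk_app, map_mul, EE_gen0, mul_one, mul_one]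
          exact ihb
        · show q (FreeGroup.mk l) * q (gen true es)
            = q (FQ (FreeGroup.mk (W0 ++ [(false, es)])) (FreeGroup.mk W1))
          rw [mk_app, q_y0 _ _ es ihb, ihe]
      · -- y^es at t = true
        have ihb : EE (FreeGroup.mk W1) = EE (FreeGroup.mk W0) * yy := ih.1
        have ihe : q (FreeGroup.mk l)
            = q (FQ (FreeGroup.mk W0) (FreeGroup.mk W1 * yy⁻¹)) * q xx := ih.2
        constructor
        · show EE (FreeGroup.mk (W1 ++ [(false, es)])) = EE (FreeGroup.mk W0) * yy
          rw [mk_app, map_mul, EE_gen0, mul_one]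
          exact ihb
        · show q (FreeGroup.mk l) * q (gen true es)
            = q (FQ (FreeGroup.mk W0) (FreeGroup.mk (W1 ++ [(false, es)]) * yy⁻¹)) * q xx
          rw [mk_app]
          show q (FreeGroup.mk l) * q (gen true es)
            = q (FQ (FreeGroup.mk W0) (FreeGroup.mk W1 * gen false es * yy⁻¹)) * q xx
          have he := congrArg q (e_y1 (FreeGroup.mk W0) (FreeGroup.mk W1) es)
          rw [map_mul, map_mul, map_mul] at he
          rw [he, ihe]

/-! ### S8 : infinite order of the generators -/

lemma a_sq : a * a = P (fun _ => b) := by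
  rw [a_eq]
  have e1 : (P (fun c => cond c b 1) * hP sw) * (P (fun c => cond c b 1) * hP sw)
      = P (fun c => cond c b 1) * (hP sw * P (fun c => cond c b 1) * (hP sw)⁻¹)
        * (hP sw * hP sw) := by
    group
  rw [e1, hP_conj, ← map_mul, ← map_mul, sw_mul_sw, map_one, mul_one]
  congr 1
  funext c
  cases c <;> simp

lemma pi_eval (g : Bool → Equiv.Perm LB) (c : Bool) (k : ℤ) : (g ^ k) c = (g c) ^ k :=
  map_zpow (Pi.evalMonoidHom (fun _ : Bool => Equiv.Perm LB) c) g k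

lemma b_zpow (k : ℤ) : b ^ k = P (fun c => cond c 1 (a ^ k)) := by
  rw [b_eq, ← map_zpow]
  refine congrArg P (funext fun c => ?_)
  rw [pi_eval]
  cases c <;> simp

lemma a_zpow_even (m : ℤ) : a ^ (2 * m) = P (fun _ => b ^ m) := by
  rw [zpow_mul]
  rw [show (a ^ (2:ℤ)) = a * a from by rw [show ((2:ℤ)) = 1 + 1 from rfl, zpow_add, zpow_one]]
  rw [a_sq, ← map_zpow]
  exact congrArg P (funext fun c => pi_eval _ c m)

lemma a_odd_ne_one (m : ℤ) : a ^ (2 * m + 1) ≠ 1 := by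
  intro h
  have h2 : (a ^ (2 * m + 1)) [false] = [false] := by rw [h]; rfl
  rw [zpow_add, zpow_one, a_zpow_even] at h2
  have h3 : (P (fun _ => b ^ m) * a) [false] = true :: (b ^ m) [] := rfl
  rw [h3] at h2
  have h4 : (b ^ m) ([] : List Bool) = [] := by
    rw [b_zpow]; rfl
  rw [h4] at h2
  exact absurd h2 (by simp)

lemma P_eq_one {g : Bool → Equiv.Perm LB} (h : P g = 1) : ∀ c, g c = 1 := by
  intro c
  apply Equiv.ext
  intro w
  have h2 : P g (c :: w) = c :: w := by rw [h]; rfl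
  rw [P_apply_cons] at h2
  simpa using h2

lemma b_zpow_eq_one : ∀ k : ℤ, b ^ k = 1 → k = 0 := by
  suffices H : ∀ n : ℕ, ∀ k : ℤ, k.natAbs = n → b ^ k = 1 → k = 0 by
    intro k hk; exact H k.natAbs k rfl hk
  intro n
  induction n using Nat.strong_induction_on with
  | _ n ih =>
    intro k hk hbk
    have hak : a ^ k = 1 := by
      rw [b_zpow] at hbk
      have h5 := P_eq_one hbk false
      simpa using h5
    rcases Int.even_or_odd k with ⟨m, hm⟩ | ⟨m, hm⟩
    · have hm2 : k = 2 * m := by omega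
      subst hm2
      rw [a_zpow_even] at hak
      have hbm : b ^ m = 1 := by
        have := P_eq_one hak true
        simpa using this
      by_cases h0 : m = 0
      · omega
      · have : m.natAbs < n := by omega
        have := ih m.natAbs this m rfl hbm
        omega
    · subst hm
      exact absurd hak (a_odd_ne_one m)

/-! ### S9 : the main induction -/

lemma not_swap_one (g : Bool → Equiv.Perm LB) : P g * hP sw ≠ 1 := by
  intro h
  have h2 : (P g * hP sw) [false] = [false] := by rw [h]; rfl
  have h3 : (P g * hP sw) [false] = true :: (g true) [] := rfl
  rw [h3] at h2
  exact absurd h2 (by simp)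

lemma main_ind : ∀ n : ℕ, ∀ L : List (Bool × Bool), L.length ≤ n →
    pi (FreeGroup.mk L) = 1 → q (FreeGroup.mk L) = 1 := by
  intro n
  induction n with
  | zero =>
    intro L hL _
    have : L = [] := List.eq_nil_of_length_eq_zero (Nat.le_zero.mp hL)
    subst this
    rw [← FreeGroup.one_eq_mk, map_one]
  | succ n ih =>
    intro L hL hpi
    have hTP : Theta (Phi (FreeGroup.mk L)) = 1 := by
      have h' : (Theta.comp Phi) (FreeGroup.mk L) = 1 := by rw [← pi_eq]; exact hpi
      exact h'
    rw [Phi_st, Theta_mk] at hTP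
    cases ht : (st L).2.2
    case true =>
      rw [ht] at hTP
      simp only [Bool.cond_true] at hTP
      exact absurd hTP (not_swap_one _)
    case false =>
      rw [ht] at hTP
      simp only [Bool.cond_false, map_one, mul_one] at hTP
      have hcomp := P_eq_one hTP
      have hpi0 : pi (FreeGroup.mk (st L).1) = 1 := by simpa using hcomp false
      have hpi1 : pi (FreeGroup.mk (st L).2.1) = 1 := by simpa using hcomp true
      by_cases hW1 : (st L).2.1 = []
      · obtain ⟨k, hk⟩ := degen1 L hW1
        rw [ht] at hk
        simp only [Bool.cond_false, mul_one] at hk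
        rw [hk] at hpi ⊢
        rw [map_zpow, pi_y] at hpi
        rw [b_zpow_eq_one k hpi]
        simp
      · by_cases hW0 : (st L).1 = []
        · obtain ⟨k, hk⟩ := degen0 L hW0
          rw [ht] at hk
          simp only [Bool.cond_false] at hk
          rw [hk] at hpi ⊢
          rw [map_mul, map_mul, map_zpow, map_inv, pi_x, pi_y] at hpi
          have hbk : b ^ k = 1 := by
            have h5 := congrArg (fun z => a⁻¹ * z * a) hpi
            simpa [mul_assoc] using h5
          rw [b_zpow_eq_one k hbk]
          simp
        · have hlen := st_len L
          have hp0 : 0 < (st L).1.length := List.length_pos_iff.mpr hW0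
          have hp1 : 0 < (st L).2.1.length := List.length_pos_iff.mpr hW1
          have hq0 := ih (st L).1 (by omega) hpi0
          have hq1 := ih (st L).2.1 (by omega) hpi1
          have hm := (master L).2
          rw [ht] at hm
          simp only [Bool.cond_false] at hm
          rw [hm, FQ, map_mul, EE_ker hq0, inv_one, one_mul, q_ker_SS hq0, q_cH_ker hq1,
            one_mul]

lemma pi_one_imp (w : F) (h : pi w = 1) : q w = 1 := by
  have h2 : pi (FreeGroup.mk w.toWord) = 1 := by rw [FreeGroup.mk_toWord]; exact h
  have := main_ind w.toWord.length w.toWord le_rfl h2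
  rwa [FreeGroup.mk_toWord] at this


/-- `Γ` admits the recursive presentation
`⟨x, y | [[x^p,y^p],y^p], [[y^p,x^(2p)],x^(2p)] for all p = 2^k⟩`, via `x ↦ a`, `y ↦ b`. -/
theorem Gam_presentation :
    ∃ φ : PresentedGroup GamRels ≃* ↥Gam,
      φ (PresentedGroup.of false) = ⟨a, a_mem⟩ ∧
      φ (PresentedGroup.of true) = ⟨b, b_mem⟩ := by
  have hrel : ∀ r ∈ GamRels, FreeGroup.lift (fun c => cond c b a) r = 1 := by
    intro r hr
    rcases hr with ⟨k, h | h⟩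
    · rw [h]
      show pi (R1 k) = 1
      exact (pi_R k).1
    · rw [h]
      show pi (R2 k) = 1
      exact (pi_R k).2
  let φ₀ : PresentedGroup GamRels →* Equiv.Perm LB := PresentedGroup.toGroup hrel
  have hof : ∀ c : Bool, φ₀ (PresentedGroup.of c) = cond c b a := by
    intro c
    exact PresentedGroup.toGroup.of hrel
  have hφq : ∀ w : F, φ₀ (q w) = pi w := by
    have hcomp : φ₀.comp q = pi := by
      apply FreeGroup.ext_hom
      intro c
      show φ₀ (q (FreeGroup.of c)) = pi (FreeGroup.of c)
      rw [show q (FreeGroup.of c) = PresentedGroup.of c from rfl, hof]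
      cases c
      · rw [pi_x]; rfl
      · rw [pi_y]; rfl
    intro w
    rw [← hcomp]; rfl
  have hinj : Function.Injective φ₀ := by
    apply (injective_iff_map_eq_one φ₀).mpr
    intro g
    induction g using PresentedGroup.induction_on with
    | _ w =>
      intro hg
      have hq : φ₀ (q w) = 1 := hg
      rw [hφq] at hq
      exact pi_one_imp w hq
  have hrange : φ₀.range = Gam := by
    have h1 : φ₀.range = pi.range := by
      apply le_antisymm
      · rintro g ⟨p, rfl⟩
        obtain ⟨w, rfl⟩ := PresentedGroup.mk_surjective GamRels p
        exact ⟨w, (hφq w).symm⟩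
      · rintro g ⟨w, rfl⟩
        exact ⟨q w, hφq w⟩
    rw [h1]
    show (FreeGroup.lift (fun c => cond c b a)).range = Gam
    rw [FreeGroup.range_lift_eq_closure, Gam]
    congr 1
    ext g
    simp only [Set.mem_range, Set.mem_insert_iff, Set.mem_singleton_iff]
    constructor
    · rintro ⟨c, rfl⟩
      cases c
      · exact Or.inl rfl
      · exact Or.inr rfl
    · rintro (rfl | rfl)
      · exact ⟨false, rfl⟩
      · exact ⟨true, rfl⟩
  have hinj' : Function.Injective φ₀.rangeRestrict := fun p₁ p₂ hp =>
    hinj (congrArg Subtype.val hp)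
  let e1 : PresentedGroup GamRels ≃* φ₀.range :=
    MulEquiv.ofBijective φ₀.rangeRestrict ⟨hinj', φ₀.rangeRestrict_surjective⟩
  let e2 : φ₀.range ≃* Gam := MulEquiv.subgroupCongr hrange
  refine ⟨e1.trans e2, ?_, ?_⟩
  · apply Subtype.ext
    show φ₀ (PresentedGroup.of false) = a
    rw [hof]
    rfl
  · apply Subtype.ext
    show φ₀ (PresentedGroup.of true) = b
    rw [hof]
    rfl

end PinkGroup
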